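/- arXiv:1911.12564 — 2 statements merged into one kernel-verified Lean document; each statement's English description precedes it below -/
import Mathlib

section
/- For the single-particle duality function D(x,η) = η(x)/α_x, the generator duality relation holds: applying the random walk generator A^α in the x-variable equals applying the partial exclusion generator L^α in the η-variable, i.e. for every site x and every configuration η with 0 ≤ η(y) ≤ α_y for all y, one has ∑_{y: |y−x|=1} α_y (η(y)/α_y − η(x)/α_x) = ∑_{y: |y−x|=1} [ η(x)(α_y − η(y))(η^{x,y}(x)/α_x − η(x)/α_x) + η(y)(α_x − η(x))(η^{y,x}(x)/α_x − η(x)/α_x) ], where η^{x,y} = η − δ_x + δ_y when η(x) ≥ 1 and η(y) < α_y, and η^{x,y} = η otherwise. -/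
/-!
Only the edges at `x` contribute, and each one does so separately. Along the edge `{x, y}` a jump
`x → y` happens at rate `η(x)(α_y - η(y))` and lowers `η(x)` by one, a jump `y → x` happens at rate
`η(y)(α_x - η(x))` and raises it by one; a blocked jump has rate zero, so the convention
`η^{x,y} = η` is harmless. The edge contributes `(η(y)(α_x - η(x)) - η(x)(α_y - η(y))) / α_x`,
and the terms `η(x)η(y)` cancel, leaving `η(y) - α_y η(x) / α_x = α_y (η(y)/α_y - η(x)/α_x)`.
-/

open Finset

def unitVec (d : ℕ) (i : Fin d) : Fin d → ℤ := fun j => if j = i then 1 else 0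

/-- The configuration `η^{x,y}` obtained from `η` by moving a particle from `x` to `y`
(if possible), in the environment `α`. -/
def jumpConfig (d : ℕ) (α η : (Fin d → ℤ) → ℕ) (x y : Fin d → ℤ) : (Fin d → ℤ) → ℕ :=
  if 1 ≤ η x ∧ η y < α y then
    fun z => if z = x then η x - 1 else if z = y then η y + 1 else η z
  else η

theorem unitVec_ne_zero (d : ℕ) (i : Fin d) : unitVec d i ≠ 0 := fun h => by
  simpa [unitVec] using congrFun h i

section jumpConfig

variable {d : ℕ} {α η : (Fin d → ℤ) → ℕ} {x y : Fin d → ℤ}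

theorem jumpConfig_apply_source (h : 1 ≤ η x ∧ η y < α y) :
    jumpConfig d α η x y x = η x - 1 := by
  simp [jumpConfig, h]

theorem jumpConfig_apply_target (h : 1 ≤ η x ∧ η y < α y) (hxy : x ≠ y) :
    jumpConfig d α η x y y = η y + 1 := by
  simp [jumpConfig, h, hxy.symm]

theorem jumpRate_eq_zero_of_blocked (hη : η y ≤ α y) (h : ¬(1 ≤ η x ∧ η y < α y)) :
    (η x : ℝ) * (α y - η y) = 0 := by
  rcases (by omega : η x = 0 ∨ η y = α y) with h' | h' <;> simp [h']

theorem jumpRate_mul_jumpConfig_apply_source_sub (hη : η y ≤ α y) :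
    (η x : ℝ) * (α y - η y) * (jumpConfig d α η x y x - η x) = -((η x : ℝ) * (α y - η y)) := by
  by_cases h : 1 ≤ η x ∧ η y < α y
  · rw [jumpConfig_apply_source h, Nat.cast_sub h.1]
    ring
  · rw [jumpRate_eq_zero_of_blocked hη h]
    ring

theorem jumpRate_mul_jumpConfig_apply_target_sub (hη : η x ≤ α x) (hxy : y ≠ x) :
    (η y : ℝ) * (α x - η x) * (jumpConfig d α η y x x - η x) = (η y : ℝ) * (α x - η x) := by
  by_cases h : 1 ≤ η y ∧ η x < α x
  · rw [jumpConfig_apply_target h hxy]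
    push_cast
    ring
  · rw [jumpRate_eq_zero_of_blocked hη h]
    ring

theorem edge_duality (hαx : α x ≠ 0) (hαy : α y ≠ 0) (hηx : η x ≤ α x) (hηy : η y ≤ α y)
    (hxy : y ≠ x) :
    (α y : ℝ) * ((η y : ℝ) / α y - (η x : ℝ) / α x)
      = (η x : ℝ) * (α y - η y) * ((jumpConfig d α η x y x : ℝ) / α x - (η x : ℝ) / α x)
        + (η y : ℝ) * (α x - η x) * ((jumpConfig d α η y x x : ℝ) / α x - (η x : ℝ) / α x) := by
  simp only [div_sub_div_same, mul_div_assoc', jumpRate_mul_jumpConfig_apply_source_sub hηy,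
    jumpRate_mul_jumpConfig_apply_target_sub hηx hxy]
  field_simp
  ring

end jumpConfig

/-- Duality relation `A^α D(·,η)(x) = L^α D(x,·)(η)` for `D(x,η) = η(x)/α_x`. -/
theorem duality_relation (d : ℕ) (α : (Fin d → ℤ) → ℕ) (hα : ∀ x, 1 ≤ α x)
    (η : (Fin d → ℤ) → ℕ) (hη : ∀ y, η y ≤ α y) (x : Fin d → ℤ) :
    (∑ i : Fin d,
      ((α (x + unitVec d i) : ℝ) *
          ((η (x + unitVec d i) : ℝ) / (α (x + unitVec d i) : ℝ) - (η x : ℝ) / (α x : ℝ))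
        + (α (x - unitVec d i) : ℝ) *
          ((η (x - unitVec d i) : ℝ) / (α (x - unitVec d i) : ℝ) - (η x : ℝ) / (α x : ℝ))))
    = ∑ i : Fin d,
      (((η x : ℝ) * ((α (x + unitVec d i) : ℝ) - (η (x + unitVec d i) : ℝ)) *
          ((jumpConfig d α η x (x + unitVec d i) x : ℝ) / (α x : ℝ) - (η x : ℝ) / (α x : ℝ))
        + (η (x + unitVec d i) : ℝ) * ((α x : ℝ) - (η x : ℝ)) *
          ((jumpConfig d α η (x + unitVec d i) x x : ℝ) / (α x : ℝ) - (η x : ℝ) / (α x : ℝ)))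
      + ((η x : ℝ) * ((α (x - unitVec d i) : ℝ) - (η (x - unitVec d i) : ℝ)) *
          ((jumpConfig d α η x (x - unitVec d i) x : ℝ) / (α x : ℝ) - (η x : ℝ) / (α x : ℝ))
        + (η (x - unitVec d i) : ℝ) * ((α x : ℝ) - (η x : ℝ)) *
          ((jumpConfig d α η (x - unitVec d i) x x : ℝ) / (α x : ℝ) - (η x : ℝ) / (α x : ℝ)))) := by
  have hα0 : ∀ z, α z ≠ 0 := fun z => Nat.one_le_iff_ne_zero.mp (hα z)
  refine Finset.sum_congr rfl fun i _ => ?_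
  have hadd : x + unitVec d i ≠ x := add_ne_left.mpr (unitVec_ne_zero d i)
  have hsub : x - unitVec d i ≠ x := sub_eq_self.not.mpr (unitVec_ne_zero d i)
  rw [edge_duality (hα0 x) (hα0 _) (hη x) (hη _) hadd,
    edge_duality (hα0 x) (hα0 _) (hη x) (hη _) hsub]
end

section
/- (Ladder projection preserves site occupation dynamics) Let α : Z^d → N with α_x ≥ 1, and let the ladder state space consist of functions η̃ assigning to each (x,i), x ∈ Z^d, 1 ≤ i ≤ α_x, a value in {0,1}. Define the projection π(η̃)(x) = ∑_{i=1}^{α_x} η̃(x,i). Then for every bounded cylindrical function φ on partial exclusion configurations, the ladder generator applied to φ∘π satisfies L̃^α (φ ∘ π)(η̃) = (L^α φ)(π(η̃)), where L̃^α is the ladder symmetric exclusion generator with unit rates between all ladder sites over neighboring base sites, and L^α is the partial exclusion generator with rates η(x)(α_y − η(y)). -/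
open Finset

/-- Projection of a ladder configuration to a partial exclusion configuration:
`π(η̃)(x) = ∑_{i < α_x} η̃(x,i)`. -/
def ladderProj (d : ℕ) (α : (Fin d → ℤ) → ℕ) (ηt : (Fin d → ℤ) → ℕ → ℕ) :
    (Fin d → ℤ) → ℕ := fun x => ∑ i ∈ Finset.range (α x), ηt x i

/-- Moving a ladder particle from `(x,i)` to `(y,j)`. -/
def ladderMove (d : ℕ) (ηt : (Fin d → ℤ) → ℕ → ℕ) (x : Fin d → ℤ) (i : ℕ)
    (y : Fin d → ℤ) (j : ℕ) : (Fin d → ℤ) → ℕ → ℕ :=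
  fun z k => if z = x ∧ k = i then 0 else if z = y ∧ k = j then 1 else ηt z k

/-!
The identity holds bond by bond. For a bond `{x, y}`, the nonzero terms
`η̃(x,i)(1 - η̃(y,j))(φ(π η̃^{(x,i),(y,j)}) - φ(π η̃))` move a particle from an occupied rung at `x`
to an empty rung at `y`, and the projection of the result is `η^{x,y}` whichever rungs were
chosen. So the difference of `φ` factors out, and what remains counts the occupied/empty pairs,
`π(η̃)(x) · (α_y - π(η̃)(y))`.
-/

theorem Finset.sum_update_add_self {ι M : Type*} [DecidableEq ι] [AddCommMonoid M]
    {s : Finset ι} {i : ι} (h : i ∈ s) (f : ι → M) (b : M) :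
    ∑ k ∈ s, Function.update f i b k + f i = b + ∑ k ∈ s, f k := by
  rw [sum_update_of_mem h, sdiff_singleton_eq_erase, ← sum_erase_add s f h, add_assoc]

section Ladder

variable {d : ℕ} {α : (Fin d → ℤ) → ℕ} {ηt : (Fin d → ℤ) → ℕ → ℕ} {x y : Fin d → ℤ} {i j : ℕ}

theorem ladderMove_apply_left (hxy : x ≠ y) :
    ladderMove d ηt x i y j x = Function.update (ηt x) i 0 := by
  funext k
  by_cases hk : k = i <;> simp [ladderMove, Function.update, hk, hxy]

theorem ladderMove_apply_right (hxy : x ≠ y) :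
    ladderMove d ηt x i y j y = Function.update (ηt y) j 1 := by
  funext k
  by_cases hk : k = j <;> simp [ladderMove, Function.update, hk, hxy.symm]

theorem ladderMove_apply_of_ne {z : Fin d → ℤ} (hzx : z ≠ x) (hzy : z ≠ y) :
    ladderMove d ηt x i y j z = ηt z := by
  funext k
  simp [ladderMove, hzx, hzy]

theorem one_le_ladderProj (hi : i < α x) (hx : ηt x i = 1) : 1 ≤ ladderProj d α ηt x :=
  hx ▸ single_le_sum (f := ηt x) (fun _ _ => Nat.zero_le _) (mem_range.2 hi)

theorem ladderProj_lt (hηt01 : ∀ x i, ηt x i ≤ 1) (hj : j < α y) (hy : ηt y j = 0) :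
    ladderProj d α ηt y < α y :=
  calc ladderProj d α ηt y < ∑ _k ∈ range (α y), 1 :=
        sum_lt_sum (fun k _ => hηt01 y k) ⟨j, mem_range.2 hj, by simp [hy]⟩
    _ = α y := by simp

theorem ladderProj_ladderMove (hηt01 : ∀ x i, ηt x i ≤ 1) (hxy : x ≠ y)
    (hi : i < α x) (hj : j < α y) (hx : ηt x i = 1) (hy : ηt y j = 0) :
    ladderProj d α (ladderMove d ηt x i y j) = jumpConfig d α (ladderProj d α ηt) x y := by
  rw [jumpConfig, if_pos ⟨one_le_ladderProj hi hx, ladderProj_lt hηt01 hj hy⟩]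
  funext z
  by_cases hzx : z = x
  · subst hzx
    have hsum := sum_update_add_self (mem_range.2 hi) (ηt z) 0
    simp only [hx, zero_add] at hsum
    rw [if_pos rfl]
    simp only [ladderProj, ladderMove_apply_left hxy]
    omega
  by_cases hzy : z = y
  · subst hzy
    have hsum := sum_update_add_self (mem_range.2 hj) (ηt z) 1
    simp only [hy, add_zero] at hsum
    rw [if_neg hzx, if_pos rfl]
    simp only [ladderProj, ladderMove_apply_right hxy]
    omega
  · simp only [ladderProj, ladderMove_apply_of_ne hzx hzy, if_neg hzx, if_neg hzy]

theorem sum_occupied_mul_vacant (x y : Fin d → ℤ) :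
    ∑ i ∈ range (α x), ∑ j ∈ range (α y), (ηt x i : ℝ) * (1 - (ηt y j : ℝ))
      = (ladderProj d α ηt x : ℝ) * ((α y : ℝ) - (ladderProj d α ηt y : ℝ)) := by
  simp [ladderProj, ← sum_mul_sum, sum_sub_distrib]

theorem sum_ladder_jumps (hηt01 : ∀ x i, ηt x i ≤ 1) (φ : ((Fin d → ℤ) → ℕ) → ℝ)
    (hxy : x ≠ y) :
    ∑ i ∈ range (α x), ∑ j ∈ range (α y),
        (ηt x i : ℝ) * (1 - (ηt y j : ℝ)) *
          (φ (ladderProj d α (ladderMove d ηt x i y j)) - φ (ladderProj d α ηt))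
      = (ladderProj d α ηt x : ℝ) * ((α y : ℝ) - (ladderProj d α ηt y : ℝ)) *
          (φ (jumpConfig d α (ladderProj d α ηt) x y) - φ (ladderProj d α ηt)) := by
  rw [← sum_occupied_mul_vacant, sum_mul]
  refine sum_congr rfl fun i hi => ?_
  rw [sum_mul]
  refine sum_congr rfl fun j hj => ?_
  rcases Nat.le_one_iff_eq_zero_or_eq_one.1 (hηt01 x i) with hx | hx
  · simp [hx]
  rcases Nat.le_one_iff_eq_zero_or_eq_one.1 (hηt01 y j) with hy | hy
  · rw [ladderProj_ladderMove hηt01 hxy (mem_range.1 hi) (mem_range.1 hj) hx hy]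
  · simp [hy]

theorem self_ne_add_unitVec (x : Fin d → ℤ) (i : Fin d) : x ≠ x + unitVec d i := by
  intro h
  simpa [unitVec] using congrFun h i

end Ladder

theorem ladder_projection_generator_general
    (d : ℕ) (α : (Fin d → ℤ) → ℕ)
    (ηt : (Fin d → ℤ) → ℕ → ℕ) (hηt01 : ∀ x i, ηt x i ≤ 1)
    (φ : ((Fin d → ℤ) → ℕ) → ℝ) :
    (∑' x : Fin d → ℤ, ∑ i : Fin d,
      ∑ i' ∈ Finset.range (α x), ∑ j ∈ Finset.range (α (x + unitVec d i)),
        ((ηt x i' : ℝ) * (1 - (ηt (x + unitVec d i) j : ℝ)) *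
            (φ (ladderProj d α (ladderMove d ηt x i' (x + unitVec d i) j))
              - φ (ladderProj d α ηt))
          + (ηt (x + unitVec d i) j : ℝ) * (1 - (ηt x i' : ℝ)) *
            (φ (ladderProj d α (ladderMove d ηt (x + unitVec d i) j x i'))
              - φ (ladderProj d α ηt))))
    = ∑' x : Fin d → ℤ, ∑ i : Fin d,
        ((ladderProj d α ηt x : ℝ) *
            ((α (x + unitVec d i) : ℝ) - (ladderProj d α ηt (x + unitVec d i) : ℝ)) *
            (φ (jumpConfig d α (ladderProj d α ηt) x (x + unitVec d i))
              - φ (ladderProj d α ηt))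
          + (ladderProj d α ηt (x + unitVec d i) : ℝ) *
            ((α x : ℝ) - (ladderProj d α ηt x : ℝ)) *
            (φ (jumpConfig d α (ladderProj d α ηt) (x + unitVec d i) x)
              - φ (ladderProj d α ηt))) := by
  refine tsum_congr fun x => sum_congr rfl fun i _ => ?_
  have hxy := self_ne_add_unitVec x i
  simp only [sum_add_distrib]
  rw [sum_ladder_jumps hηt01 φ hxy, sum_comm, sum_ladder_jumps hηt01 φ hxy.symm]

/-- The ladder projection intertwines the ladder symmetric exclusion generator with the
partial exclusion generator: `L̃^α (φ ∘ π)(η̃) = (L^α φ)(π(η̃))`. -/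
theorem ladder_projection_generator
    (d : ℕ) (hd : 0 < d) (α : (Fin d → ℤ) → ℕ) (hα : ∀ x, 1 ≤ α x)
    (ηt : (Fin d → ℤ) → ℕ → ℕ) (hηt01 : ∀ x i, ηt x i ≤ 1)
    (hηtsupp : ∀ x i, α x ≤ i → ηt x i = 0)
    (φ : ((Fin d → ℤ) → ℕ) → ℝ)
    (hφbdd : ∃ M : ℝ, ∀ η, |φ η| ≤ M)
    (hφcyl : ∃ S : Finset (Fin d → ℤ), ∀ η η' : (Fin d → ℤ) → ℕ,
      (∀ x ∈ S, η x = η' x) → φ η = φ η') :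
    (∑' x : Fin d → ℤ, ∑ i : Fin d,
      ∑ i' ∈ Finset.range (α x), ∑ j ∈ Finset.range (α (x + unitVec d i)),
        ((ηt x i' : ℝ) * (1 - (ηt (x + unitVec d i) j : ℝ)) *
            (φ (ladderProj d α (ladderMove d ηt x i' (x + unitVec d i) j))
              - φ (ladderProj d α ηt))
          + (ηt (x + unitVec d i) j : ℝ) * (1 - (ηt x i' : ℝ)) *
            (φ (ladderProj d α (ladderMove d ηt (x + unitVec d i) j x i'))
              - φ (ladderProj d α ηt))))
    = ∑' x : Fin d → ℤ, ∑ i : Fin d,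
        ((ladderProj d α ηt x : ℝ) *
            ((α (x + unitVec d i) : ℝ) - (ladderProj d α ηt (x + unitVec d i) : ℝ)) *
            (φ (jumpConfig d α (ladderProj d α ηt) x (x + unitVec d i))
              - φ (ladderProj d α ηt))
          + (ladderProj d α ηt (x + unitVec d i) : ℝ) *
            ((α x : ℝ) - (ladderProj d α ηt x : ℝ)) *
            (φ (jumpConfig d α (ladderProj d α ηt) (x + unitVec d i) x)
              - φ (ladderProj d α ηt))) :=
  ladder_projection_generator_general d α ηt hηt01 φ
end
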